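/- Soundness and principality of simplification: if the simplification judgment Q ⊢ C ⤳ Q'; θ holds (derived by rules S-Fun, S-Data, S-Uni, S-Triv, S-Entail, S-Rem), then (Q', θ) is a guess-free solution for (Q, C); that is, Q ∧ Q' ⊨ Cθ, dom(θ) is disjoint from the free unification variables of Q and of Q', and Q ∧ C ⊨ Q' ∧ ⋀_{π∈dom(θ)}(π = θ(π)) ∧ ⋀_{α∈dom(θ)}(α ∼ θ(α)). -/

import Mathlib

/-- The multiplicity set {1, ω}. -/
inductive M where
  | one : M
  | omega : M
deriving DecidableEq, Repr

/-- Multiplication: 1 is identity, ω is absorbing. -/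
def M.mul : M → M → M
  | .one, m => m
  | .omega, _ => .omega

/-- The order ≤: reflexive closure of 1 ≤ ω. -/
def M.le (m₁ m₂ : M) : Prop := m₁ = m₂ ∨ (m₁ = .one ∧ m₂ = .omega)

/-- Multiplicity atoms: rigid variables, unification variables, constants. -/
inductive MAtom where
  | rvar : ℕ → MAtom
  | uvar : ℕ → MAtom
  | const : M → MAtom
deriving DecidableEq

/-- Types: rigid type variables, unification type variables, datatypes, and
multiplicity-annotated arrows. -/
inductive Ty where
  | rvar : ℕ → Ty
  | uvar : ℕ → Ty
  | data : ℕ → List MAtom → List Ty → Ty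
  | arr : Ty → MAtom → Ty → Ty

/-- A valuation of multiplicity variables (rigid and unification). -/
structure Val where
  r : ℕ → M
  u : ℕ → M

def evalMAtom (v : Val) : MAtom → M
  | .rvar n => v.r n
  | .uvar n => v.u n
  | .const m => m

def evalMProd (v : Val) (l : List MAtom) : M :=
  (l.map (evalMAtom v)).foldr M.mul M.one

/-- Evaluate all multiplicity atoms in a type under a valuation. -/
def evalTy (v : Val) : Ty → Ty
  | .rvar a => .rvar a
  | .uvar a => .uvar a
  | .arr σ μ τ => .arr (evalTy v σ) (.const (evalMAtom v μ)) (evalTy v τ)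
  | .data d ms ts => .data d (ms.map (fun a => .const (evalMAtom v a)))
      (ts.attach.map (fun ⟨t, _⟩ => evalTy v t))
decreasing_by
  all_goals simp_wf
  all_goals first
    | omega
    | (have := List.sizeOf_lt_of_mem ‹t ∈ ts›; omega)

/-- A multiplicity predicate μ ≤ ∏ᵢ νᵢ. -/
abbrev MIneq := MAtom × List MAtom

/-- Wanted constraints: multiplicity inequalities and type equalities. -/
inductive Pred19 where
  | ineq : MAtom → List MAtom → Pred19
  | tyeq : Ty → Ty → Pred19

/-- A multiplicity-only constraint Q. -/
abbrev QC := List MIneq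

/-- A general constraint C. -/
abbrev C19 := List Pred19

def MIneq.holds (v : Val) (p : MIneq) : Prop :=
  (evalMAtom v p.1).le (evalMProd v p.2)

def Pred19.holds (v : Val) : Pred19 → Prop
  | .ineq μ l => (evalMAtom v μ).le (evalMProd v l)
  | .tyeq τ τ' => evalTy v τ = evalTy v τ'

def QHolds (Q : QC) (v : Val) : Prop := ∀ p ∈ Q, p.holds v
def CHolds (C : C19) (v : Val) : Prop := ∀ p ∈ C, p.holds v

/-- A substitution for unification variables (of both sorts). -/
structure Subst19 where
  m : ℕ → Option MAtom
  t : ℕ → Option Ty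

def idSub : Subst19 := ⟨fun _ => none, fun _ => none⟩

def appMAtom (s : Subst19) : MAtom → MAtom
  | .uvar π => (s.m π).getD (.uvar π)
  | a => a

def appTy (s : Subst19) : Ty → Ty
  | .rvar a => .rvar a
  | .uvar α => (s.t α).getD (.uvar α)
  | .arr σ μ τ => .arr (appTy s σ) (appMAtom s μ) (appTy s τ)
  | .data d ms ts => .data d (ms.map (appMAtom s))
      (ts.attach.map (fun ⟨t, _⟩ => appTy s t))
decreasing_by
  all_goals simp_wf
  all_goals first
    | omega
    | (have := List.sizeOf_lt_of_mem ‹t ∈ ts›; omega)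

def appPred (s : Subst19) : Pred19 → Pred19
  | .ineq μ l => .ineq (appMAtom s μ) (l.map (appMAtom s))
  | .tyeq τ τ' => .tyeq (appTy s τ) (appTy s τ')

def appC (s : Subst19) (C : C19) : C19 := C.map (appPred s)

/-- The substitution [α ↦ τ] on type unification variables. -/
def singleT (α : ℕ) (τ : Ty) : Subst19 :=
  ⟨fun _ => none, fun β => if β = α then some τ else none⟩

/-- Composition θ ∘ θ': apply θ' first, then θ. -/
def compose (s s' : Subst19) : Subst19 :=
  ⟨fun π => match s'.m π with
     | some a => some (appMAtom s a)
     | none => s.m π,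
   fun α => match s'.t α with
     | some τ => some (appTy s τ)
     | none => s.t α⟩

/-- Whether a type mentions a type unification variable. -/
def tyMentionsU (α : ℕ) : Ty → Prop
  | .rvar _ => False
  | .uvar β => β = α
  | .arr σ _ τ => tyMentionsU α σ ∨ tyMentionsU α τ
  | .data _ _ ts => ∃ t ∈ ts.attach, tyMentionsU α t.val
decreasing_by
  all_goals simp_wf
  all_goals first
    | omega
    | (have := List.sizeOf_lt_of_mem t.2; omega)

/-- Whether a multiplicity-only constraint mentions a multiplicity
unification variable. -/
def qMentionsMu (Q : QC) (π : ℕ) : Prop :=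
  ∃ p ∈ Q, p.1 = .uvar π ∨ .uvar π ∈ p.2

def isIneq : Pred19 → Prop
  | .ineq _ _ => True
  | .tyeq _ _ => False

def ineqsOf (C : C19) : C19 := C.filter (fun p => match p with | .ineq _ _ => true | _ => false)

def toQC (C : C19) : QC :=
  C.filterMap (fun p => match p with | .ineq μ l => some (μ, l) | _ => none)

/-- The simplification judgment Q ⊢ C ⤳ Q'; θ, given by the rules S-Fun,
S-Data, S-Uni, S-Triv, S-Entail, S-Rem, working modulo commutativity and
associativity of ∧ and commutativity of ∼. -/
inductive Simp : QC → C19 → QC → Subst19 → Prop where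
  | perm {Q C C' Q' s} : C.Perm C' → Simp Q C' Q' s → Simp Q C Q' s
  | symm {Q τ τ' C Q' s} :
      Simp Q (.tyeq τ' τ :: C) Q' s → Simp Q (.tyeq τ τ' :: C) Q' s
  | sFun {Q σ μ τ σ' μ' τ' C Q' s} :
      Simp Q (.tyeq σ σ' :: .ineq μ [μ'] :: .ineq μ' [μ] :: .tyeq τ τ' :: C) Q' s →
      Simp Q (.tyeq (.arr σ μ τ) (.arr σ' μ' τ') :: C) Q' s
  | sData {Q d ms ts ms' ts' C Q' s} :
      ms.length = ms'.length → ts.length = ts'.length →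
      Simp Q ((List.zipWith (fun a b => Pred19.ineq a [b]) ms ms') ++
              (List.zipWith (fun a b => Pred19.ineq b [a]) ms ms') ++
              (List.zipWith Pred19.tyeq ts ts') ++ C) Q' s →
      Simp Q (.tyeq (.data d ms ts) (.data d ms' ts') :: C) Q' s
  | sUni {Q α τ C Q' s} :
      ¬ tyMentionsU α τ →
      Simp Q (appC (singleT α τ) C) Q' s →
      Simp Q (.tyeq (.uvar α) τ :: C) Q' (compose s (singleT α τ))
  | sTriv {Q τ C Q' s} : Simp Q C Q' s → Simp Q (.tyeq τ τ :: C) Q' s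
  | sEntail {Q μ l C Q' s} :
      (∀ v : Val, QHolds Q v → CHolds (ineqsOf C) v → (Pred19.ineq μ l).holds v) →
      Simp Q C Q' s →
      Simp Q (.ineq μ l :: C) Q' s
  | sRem {Q Qr} : (∀ p ∈ Qr, isIneq p) → Simp Q Qr (toQC Qr) idSub

/-!
Every rule replaces the wanted constraint by one with the same solutions: an arrow or data
equality holds under a valuation iff its components agree, and in `{1, ω}` equality of
multiplicities is the conjunction of the two inequalities. For S-Uni, a valuation satisfies
`α ∼ τ` iff it satisfies the substitution `[α ↦ τ]`, and any valuation satisfying a substitution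
gives the same meaning to a constraint before and after applying it; since `α ∉ fuv(τ)`,
`[α ↦ τ]` fixes `τ`, so the equality itself becomes trivial. Induction on the derivation gives
both directions. No rule binds a multiplicity variable, and type variables do not occur in
multiplicity constraints, so the domain of `θ` is disjoint from those of `Q` and `Q'`.
-/

namespace M

lemma le_refl (a : M) : a.le a := Or.inl rfl

lemma le_antisymm {a b : M} (h : a.le b) (h' : b.le a) : a = b := by
  cases a <;> cases b <;> simp_all [M.le]

lemma mul_one (a : M) : a.mul .one = a := by cases a <;> rfl

end M

lemma List.map_eq_map_iff_of_length_eq {α β γ : Type*} {f : α → γ} {g : β → γ}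
    {l : List α} {l' : List β} (h : l.length = l'.length) :
    l.map f = l'.map g ↔ ∀ a b, (a, b) ∈ l.zip l' → f a = g b := by
  rw [← List.forall₂_eq_eq_eq, List.forall₂_map_left_iff, List.forall₂_map_right_iff,
    List.forall₂_iff_zip]
  simp [h]

section Semantics

variable {v : Val}

lemma CHolds_cons {p : Pred19} {C : C19} : CHolds (p :: C) v ↔ p.holds v ∧ CHolds C v :=
  List.forall_mem_cons

lemma CHolds_append {C C' : C19} : CHolds (C ++ C') v ↔ CHolds C v ∧ CHolds C' v :=
  List.forall_mem_append

lemma CHolds_zipWith {α β : Type*} {F : α → β → Pred19} {l : List α} {l' : List β} :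
    CHolds (List.zipWith F l l') v ↔ ∀ a b, (a, b) ∈ l.zip l' → (F a b).holds v := by
  simp only [CHolds, ← List.map_uncurry_zip_eq_zipWith, List.forall_mem_map, Prod.forall,
    Function.uncurry_apply_pair]

lemma evalMAtom_eq_iff {a b : MAtom} :
    evalMAtom v a = evalMAtom v b ↔
      (Pred19.ineq a [b]).holds v ∧ (Pred19.ineq b [a]).holds v := by
  simp only [Pred19.holds, evalMProd, List.map_cons, List.map_nil, List.foldr_cons,
    List.foldr_nil, M.mul_one]
  exact ⟨fun h => h ▸ ⟨M.le_refl _, M.le_refl _⟩, fun h => M.le_antisymm h.1 h.2⟩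

@[simp]
lemma evalTy_data (d : ℕ) (ms : List MAtom) (ts : List Ty) :
    evalTy v (.data d ms ts) =
      .data d (ms.map fun a => .const (evalMAtom v a)) (ts.map (evalTy v)) := by
  rw [evalTy]
  simp

lemma holds_tyeq_arr_iff {σ τ σ' τ' : Ty} {μ μ' : MAtom} :
    (Pred19.tyeq (.arr σ μ τ) (.arr σ' μ' τ')).holds v ↔
      CHolds [.tyeq σ σ', .ineq μ [μ'], .ineq μ' [μ], .tyeq τ τ'] v := by
  simp only [CHolds, List.forall_mem_cons, List.not_mem_nil, IsEmpty.forall_iff, implies_true,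
    and_true]
  rw [← and_assoc (a := (Pred19.ineq μ [μ']).holds v), ← evalMAtom_eq_iff]
  simp [Pred19.holds, evalTy]

lemma holds_tyeq_data_iff {d : ℕ} {ms ms' : List MAtom} {ts ts' : List Ty}
    (hms : ms.length = ms'.length) (hts : ts.length = ts'.length) :
    (Pred19.tyeq (.data d ms ts) (.data d ms' ts')).holds v ↔
      CHolds (List.zipWith (fun a b => Pred19.ineq a [b]) ms ms' ++
        List.zipWith (fun a b => Pred19.ineq b [a]) ms ms' ++
        List.zipWith Pred19.tyeq ts ts') v := by
  simp only [Pred19.holds, evalTy_data, Ty.data.injEq, true_and, CHolds_append, CHolds_zipWith,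
    List.map_eq_map_iff_of_length_eq hms, List.map_eq_map_iff_of_length_eq hts, MAtom.const.injEq,
    evalMAtom_eq_iff, forall_and, Pred19.holds]

end Semantics

section Substitution

@[simp]
lemma appTy_data (s : Subst19) (d : ℕ) (ms : List MAtom) (ts : List Ty) :
    appTy s (.data d ms ts) = .data d (ms.map (appMAtom s)) (ts.map (appTy s)) := by
  rw [appTy]
  simp

lemma appC_cons (s : Subst19) (p : Pred19) (C : C19) :
    appC s (p :: C) = appPred s p :: appC s C := rfl

lemma appC_append (s : Subst19) (C C' : C19) :
    appC s (C ++ C') = appC s C ++ appC s C' := List.map_append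

lemma appMAtom_compose (s s' : Subst19) (a : MAtom) :
    appMAtom (compose s s') a = appMAtom s (appMAtom s' a) := by
  cases a with
  | uvar π => cases h : s'.m π <;> simp [appMAtom, compose, h]
  | _ => rfl

lemma appTy_compose (s s' : Subst19) (τ : Ty) :
    appTy (compose s s') τ = appTy s (appTy s' τ) := by
  induction τ using appTy.induct with
  | case1 => simp [appTy]
  | case2 α => cases h : s'.t α <;> simp [appTy, compose, h]
  | case3 σ μ τ ihσ ihτ => simp [appTy, ihσ, ihτ, appMAtom_compose]
  | case4 d ms ts ih =>
    simp only [appTy_data, List.map_map]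
    exact congrArg₂ _ (List.map_congr_left fun a _ => appMAtom_compose s s' a)
      (List.map_congr_left ih)

lemma appC_compose (s s' : Subst19) (C : C19) :
    appC (compose s s') C = appC s (appC s' C) := by
  simp only [appC, List.map_map]
  refine List.map_congr_left fun p _ => ?_
  cases p <;> simp [appPred, appTy_compose, appMAtom_compose]

lemma appMAtom_of_m_eq_none {s : Subst19} (hs : ∀ π, s.m π = none) : appMAtom s = id := by
  funext a
  cases a <;> simp [appMAtom, hs]

lemma appTy_of_m_eq_none {s : Subst19} (hs : ∀ π, s.m π = none) {τ : Ty}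
    (ht : ∀ α, tyMentionsU α τ → s.t α = none) : appTy s τ = τ := by
  induction τ using appTy.induct with
  | case1 => rw [appTy]
  | case2 α => simp [appTy, ht α (by rw [tyMentionsU])]
  | case3 σ μ τ ihσ ihτ =>
    simp only [tyMentionsU] at ht
    simp [appTy, appMAtom_of_m_eq_none hs, ihσ fun α h => ht α (.inl h),
      ihτ fun α h => ht α (.inr h)]
  | case4 d ms ts ih =>
    simp only [tyMentionsU] at ht
    have hts : ts.map (appTy s) = ts := by
      refine (List.map_congr_left fun t ht' => ?_).trans (List.map_id' ts)
      exact ih t ht' fun α h => ht α ⟨⟨t, ht'⟩, List.mem_attach _ _, h⟩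
    simp [appMAtom_of_m_eq_none hs, hts]

lemma appPred_of_m_eq_none {s : Subst19} (hs : ∀ π, s.m π = none) (μ : MAtom)
    (l : List MAtom) :
    appPred s (.ineq μ l) = .ineq μ l := by
  simp [appPred, appMAtom_of_m_eq_none hs]

lemma appC_idSub (C : C19) : appC idSub C = C := by
  have hm : ∀ π, idSub.m π = none := fun _ => rfl
  refine (List.map_congr_left fun p _ => ?_).trans (List.map_id C)
  cases p with
  | ineq μ l => exact appPred_of_m_eq_none hm μ l
  | tyeq τ τ' => simp [appPred, appTy_of_m_eq_none hm (fun _ _ => rfl)]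

lemma appTy_singleT_uvar_self (α : ℕ) (τ : Ty) : appTy (singleT α τ) (.uvar α) = τ := by
  simp [appTy, singleT]

lemma appTy_singleT_of_not_tyMentionsU {α : ℕ} {τ : Ty} (τ₀ : Ty) (h : ¬ tyMentionsU α τ) :
    appTy (singleT α τ₀) τ = τ :=
  appTy_of_m_eq_none (fun _ => rfl) fun β hβ => by
    have hβα : β ≠ α := by rintro rfl; exact h hβ
    simp [singleT, hβα]

end Substitution

section SubstSemantics

/-- The constraint `⋀ (π = θ π) ∧ ⋀ (α ∼ θ α)` expressed by a substitution `θ`. -/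
def Subst19.holds (v : Val) (s : Subst19) : Prop :=
  (∀ π a, s.m π = some a → evalMAtom v (.uvar π) = evalMAtom v a) ∧
  (∀ α τ, s.t α = some τ → evalTy v (.uvar α) = evalTy v τ)

variable {v : Val} {s : Subst19}

lemma evalMAtom_appMAtom (hs : s.holds v) (a : MAtom) :
    evalMAtom v (appMAtom s a) = evalMAtom v a := by
  cases a with
  | uvar π =>
    cases h : s.m π with
    | none => simp [appMAtom, h]
    | some a => simp [appMAtom, h, hs.1 π a h]
  | _ => rfl

lemma evalTy_appTy (hs : s.holds v) (τ : Ty) : evalTy v (appTy s τ) = evalTy v τ := by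
  induction τ using appTy.induct with
  | case1 => rw [appTy]
  | case2 α =>
    cases h : s.t α with
    | none => simp [appTy, h]
    | some τ => simp [appTy, h, hs.2 α τ h]
  | case3 σ μ τ ihσ ihτ => simp [appTy, evalTy, ihσ, ihτ, evalMAtom_appMAtom hs]
  | case4 d ms ts ih =>
    simp only [appTy_data, evalTy_data, List.map_map]
    exact congrArg₂ _ (List.map_congr_left fun a _ => by simp [evalMAtom_appMAtom hs])
      (List.map_congr_left ih)

lemma CHolds_appC (hs : s.holds v) {C : C19} : CHolds (appC s C) v ↔ CHolds C v := by
  refine List.forall_mem_map.trans (forall₂_congr fun p _ => ?_)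
  cases p <;>
    simp [appPred, Pred19.holds, evalMProd, Function.comp_def, evalMAtom_appMAtom hs,
      evalTy_appTy hs]

lemma Subst19.holds_singleT {α : ℕ} {τ : Ty} :
    (singleT α τ).holds v ↔ evalTy v (.uvar α) = evalTy v τ := by
  simp [Subst19.holds, singleT]

lemma Subst19.holds.compose {s' : Subst19} (hs : s.holds v) (hs' : s'.holds v) :
    (compose s s').holds v := by
  constructor
  · intro π a h
    cases h' : s'.m π <;> simp only [_root_.compose, h'] at h
    · exact hs.1 π a h
    · cases h; rw [evalMAtom_appMAtom hs]; exact hs'.1 π _ h'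
  · intro α τ h
    cases h' : s'.t α <;> simp only [_root_.compose, h'] at h
    · exact hs.2 α τ h
    · cases h; rw [evalTy_appTy hs]; exact hs'.2 α _ h'

end SubstSemantics

lemma QHolds_toQC_iff {C : C19} (hC : ∀ p ∈ C, isIneq p) {v : Val} :
    QHolds (toQC C) v ↔ CHolds C v := by
  simp only [QHolds, CHolds, toQC, List.forall_mem_filterMap]
  refine forall₂_congr fun p hp => ?_
  cases p with
  | ineq μ l => simp [MIneq.holds, Pred19.holds]
  | tyeq => exact absurd (hC _ hp) id

namespace Simp

variable {Q : QC} {C : C19} {Q' : QC} {s : Subst19}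

theorem m_eq_none (h : Simp Q C Q' s) (π : ℕ) : s.m π = none := by
  induction h with
  | sUni _ _ ih => simp [_root_.compose, singleT, ih]
  | sRem => rfl
  | _ => assumption

theorem sound (h : Simp Q C Q' s) (v : Val) (hQ : QHolds Q v) (hQ' : QHolds Q' v) :
    CHolds (appC s C) v := by
  induction h with
  | perm hperm _ ih => exact fun p hp => ih hQ' p ((hperm.map _).mem_iff.mp hp)
  | symm _ ih =>
    obtain ⟨hhead, htail⟩ := CHolds_cons.mp (ih hQ')
    exact CHolds_cons.mpr ⟨Eq.symm hhead, htail⟩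
  | @sFun σ μ τ σ' μ' τ' C _ s _ ih =>
    have h : CHolds (appC s [.tyeq σ σ', .ineq μ [μ'], .ineq μ' [μ], .tyeq τ τ'] ++ appC s C) v :=
      ih hQ'
    obtain ⟨hargs, htail⟩ := CHolds_append.mp h
    refine CHolds_cons.mpr ⟨?_, htail⟩
    simp only [appPred, appTy]
    exact holds_tyeq_arr_iff.mpr hargs
  | sData hms hts _ ih =>
    obtain ⟨hargs, htail⟩ := CHolds_append.mp (appC_append .. ▸ ih hQ')
    refine CHolds_cons.mpr ⟨?_, htail⟩
    simp only [appPred, appTy_data]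
    rw [holds_tyeq_data_iff (by simp [hms]) (by simp [hts])]
    simpa [appC, List.map_zipWith, List.zipWith_map, appPred] using hargs
  | sUni hα _ ih =>
    rw [appC_cons, CHolds_cons, appC_compose]
    refine ⟨?_, ih hQ'⟩
    show evalTy v _ = evalTy v _
    rw [appTy_compose, appTy_compose, appTy_singleT_uvar_self,
      appTy_singleT_of_not_tyMentionsU _ hα]
  | sTriv _ ih => exact CHolds_cons.mpr ⟨rfl, ih hQ'⟩
  | sEntail hent hsimp ih =>
    have hm := hsimp.m_eq_none
    have htail := ih hQ'
    refine CHolds_cons.mpr ⟨?_, htail⟩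
    rw [appPred_of_m_eq_none hm]
    refine hent v hQ fun p hp => ?_
    obtain ⟨hpC, hineq⟩ := List.mem_filter.mp hp
    cases p with
    | ineq μ l => simpa [appPred_of_m_eq_none hm] using htail _ (List.mem_map_of_mem hpC)
    | tyeq => simp at hineq
  | sRem hC => rwa [appC_idSub, ← QHolds_toQC_iff hC]

theorem principal (h : Simp Q C Q' s) (v : Val) (hC : CHolds C v) :
    QHolds Q' v ∧ s.holds v := by
  induction h with
  | perm hperm _ ih => exact ih fun p hp => hC p (hperm.mem_iff.mpr hp)
  | symm _ ih =>
    obtain ⟨hhead, htail⟩ := CHolds_cons.mp hC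
    exact ih (CHolds_cons.mpr ⟨Eq.symm hhead, htail⟩)
  | sFun _ ih =>
    obtain ⟨hhead, htail⟩ := CHolds_cons.mp hC
    exact ih (CHolds_append.mpr ⟨holds_tyeq_arr_iff.mp hhead, htail⟩)
  | sData hms hts _ ih =>
    obtain ⟨hhead, htail⟩ := CHolds_cons.mp hC
    exact ih (CHolds_append.mpr ⟨(holds_tyeq_data_iff hms hts).mp hhead, htail⟩)
  | sUni _ _ ih =>
    obtain ⟨hhead, htail⟩ := CHolds_cons.mp hC
    have hα := Subst19.holds_singleT.mpr hhead
    obtain ⟨hQ', hs⟩ := ih ((CHolds_appC hα).mpr htail)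
    exact ⟨hQ', hs.compose hα⟩
  | sTriv _ ih => exact ih (CHolds_cons.mp hC).2
  | sEntail _ _ ih => exact ih (CHolds_cons.mp hC).2
  | sRem hC' => exact ⟨(QHolds_toQC_iff hC').mpr hC, by simp [Subst19.holds, idSub]⟩

end Simp

theorem stmt19 : ∀ (Q : QC) (C : C19) (Q' : QC) (s : Subst19),
    Simp Q C Q' s →
    (∀ v : Val, QHolds Q v → QHolds Q' v → CHolds (appC s C) v) ∧
    (∀ π, s.m π ≠ none → ¬ qMentionsMu Q π ∧ ¬ qMentionsMu Q' π) ∧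
    (∀ v : Val, QHolds Q v → CHolds C v →
      QHolds Q' v ∧
      (∀ π a, s.m π = some a → evalMAtom v (.uvar π) = evalMAtom v a) ∧
      (∀ α τ, s.t α = some τ → evalTy v (.uvar α) = evalTy v τ)) := by
  intro Q C Q' s h
  exact ⟨h.sound, fun π hπ => absurd (h.m_eq_none π) hπ, fun v _ hC => h.principal v hC⟩
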